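/- The expected β-gradient of the noisy-data least squares objective at the true parameter equals the explicit bias vector: E[∇_β L*_LS(γ0)] = E[−2 X*ᵀ S0 d0² S0ᵀ (S0 Y* − X* β0)] = (0_{p1}ᵀ, 2λx² tr(S0ᵀS0 d0²) β02ᵀ)ᵀ ∈ ℝ^p. -/

import Mathlib

open MeasureTheory ProbabilityTheory Matrix
open scoped Matrix

namespace PSAR

/-- `S(ρ) = I_N − ρ W`. -/
noncomputable def Smat {N : ℕ} (W : Matrix (Fin N) (Fin N) ℝ) (ρ : ℝ) :
    Matrix (Fin N) (Fin N) ℝ :=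
  1 - ρ • W

/-- `Ω(ρ, σ²) = σ² I_N + λ² S(ρ) S(ρ)ᵀ`. -/
noncomputable def Omat {N : ℕ} (W : Matrix (Fin N) (Fin N) ℝ) (lam2 ρ σ2 : ℝ) :
    Matrix (Fin N) (Fin N) ℝ :=
  σ2 • (1 : Matrix (Fin N) (Fin N) ℝ) + lam2 • (Smat W ρ * (Smat W ρ)ᵀ)

/-- `𝕎S(ρ) = W S(ρ)ᵀ + S(ρ) Wᵀ`. -/
noncomputable def WSmat {N : ℕ} (W : Matrix (Fin N) (Fin N) ℝ) (ρ : ℝ) :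
    Matrix (Fin N) (Fin N) ℝ :=
  W * (Smat W ρ)ᵀ + Smat W ρ * Wᵀ

/-- `𝕎(ρ) = Wᵀ S(ρ) + S(ρ)ᵀ W` (least squares version). -/
noncomputable def WLSmat {N : ℕ} (W : Matrix (Fin N) (Fin N) ℝ) (ρ : ℝ) :
    Matrix (Fin N) (Fin N) ℝ :=
  Wᵀ * Smat W ρ + (Smat W ρ)ᵀ * W

/-- The negative log-likelihood
`L(θ) = −log det S(ρ) + (1/2) log det Ω(ρ,σ²) + (1/2)(S(ρ)Ys − Xβ)ᵀ Ω(ρ,σ²)⁻¹ (S(ρ)Ys − Xβ)`. -/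
noncomputable def nll {N p1 p2 : ℕ} (W : Matrix (Fin N) (Fin N) ℝ) (lam2 : ℝ)
    (X : Matrix (Fin N) (Fin p1 ⊕ Fin p2) ℝ) (Ys : Fin N → ℝ)
    (ρ : ℝ) (β : Fin p1 ⊕ Fin p2 → ℝ) (σ2 : ℝ) : ℝ :=
  - Real.log (Smat W ρ).det + (1 / 2) * Real.log (Omat W lam2 ρ σ2).det
    + (1 / 2) * ((Smat W ρ *ᵥ Ys - X *ᵥ β) ⬝ᵥ
        ((Omat W lam2 ρ σ2)⁻¹ *ᵥ (Smat W ρ *ᵥ Ys - X *ᵥ β)))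

/-- Diagonal matrix `d(ρ)` with `d(ρ)_{ii} = 1/(S(ρ)ᵀ S(ρ))_{ii}`. -/
noncomputable def dmat {N : ℕ} (W : Matrix (Fin N) (Fin N) ℝ) (ρ : ℝ) :
    Matrix (Fin N) (Fin N) ℝ :=
  Matrix.diagonal fun i => ((((Smat W ρ)ᵀ * Smat W ρ) i i)⁻¹)

/-- Entrywise first derivative `ḋ(ρ)` of `d(ρ)` in `ρ`. -/
noncomputable def dmatDot {N : ℕ} (W : Matrix (Fin N) (Fin N) ℝ) (ρ : ℝ) :
    Matrix (Fin N) (Fin N) ℝ :=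
  Matrix.diagonal fun i => deriv (fun r => ((((Smat W r)ᵀ * Smat W r) i i)⁻¹)) ρ

/-- Entrywise second derivative `d̈(ρ)` of `d(ρ)` in `ρ`. -/
noncomputable def dmatDDot {N : ℕ} (W : Matrix (Fin N) (Fin N) ℝ) (ρ : ℝ) :
    Matrix (Fin N) (Fin N) ℝ :=
  Matrix.diagonal fun i => deriv (deriv (fun r => ((((Smat W r)ᵀ * Smat W r) i i)⁻¹))) ρ

/-- Least squares objective `L_LS(γ) = ‖d(ρ) S(ρ)ᵀ (S(ρ)Y − Xβ)‖²`. -/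
noncomputable def lsObj {N p1 p2 : ℕ} (W : Matrix (Fin N) (Fin N) ℝ)
    (X : Matrix (Fin N) (Fin p1 ⊕ Fin p2) ℝ) (Y : Fin N → ℝ)
    (ρ : ℝ) (β : Fin p1 ⊕ Fin p2 → ℝ) : ℝ :=
  ((dmat W ρ * (Smat W ρ)ᵀ) *ᵥ (Smat W ρ *ᵥ Y - X *ᵥ β)) ⬝ᵥ
    ((dmat W ρ * (Smat W ρ)ᵀ) *ᵥ (Smat W ρ *ᵥ Y - X *ᵥ β))

/-- Observed response `Y* = S0⁻¹(Xβ0 + E) + ε`. -/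
noncomputable def Yobs {N p1 p2 : ℕ} (W : Matrix (Fin N) (Fin N) ℝ) (ρ0 : ℝ)
    (X : Matrix (Fin N) (Fin p1 ⊕ Fin p2) ℝ) (β0 : Fin p1 ⊕ Fin p2 → ℝ)
    (E ε : Fin N → ℝ) : Fin N → ℝ :=
  (Smat W ρ0)⁻¹ *ᵥ (X *ᵥ β0 + E) + ε

/-- True response `Y = S0⁻¹(Xβ0 + E)`. -/
noncomputable def Ytrue {N p1 p2 : ℕ} (W : Matrix (Fin N) (Fin N) ℝ) (ρ0 : ℝ)
    (X : Matrix (Fin N) (Fin p1 ⊕ Fin p2) ℝ) (β0 : Fin p1 ⊕ Fin p2 → ℝ)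
    (E : Fin N → ℝ) : Fin N → ℝ :=
  (Smat W ρ0)⁻¹ *ᵥ (X *ᵥ β0 + E)

/-- Observed covariates `X* = (X1, X2 + Ex)`. -/
noncomputable def Xobs {N p1 p2 : ℕ} (X : Matrix (Fin N) (Fin p1 ⊕ Fin p2) ℝ)
    (Ex : Fin N → Fin p2 → ℝ) : Matrix (Fin N) (Fin p1 ⊕ Fin p2) ℝ :=
  X + Matrix.of fun i j => Sum.elim (fun _ => (0 : ℝ)) (fun k => Ex i k) j

/-- All the noise entries of `E`, `ε`, `Ex` gathered as a single family. -/
def noiseFam {Ωs : Type*} {N p2 : ℕ} (E ε : Ωs → Fin N → ℝ)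
    (Ex : Ωs → Fin N → Fin p2 → ℝ) :
    (Fin N ⊕ Fin N ⊕ Fin N × Fin p2) → Ωs → ℝ :=
  fun z ω => Sum.elim (fun i => E ω i) (Sum.elim (fun i => ε ω i) (fun q => Ex ω q.1 q.2)) z


section Quadratic

variable {m n : Type*} [Fintype m] [Fintype n]

theorem hasDerivAt_dotProduct_self_mulVec_sub_smul (A : Matrix m n ℝ) (u b : n → ℝ) :
    HasDerivAt (fun t : ℝ => (A *ᵥ (u - t • b)) ⬝ᵥ (A *ᵥ (u - t • b)))
      (-2 * ((A *ᵥ u) ⬝ᵥ (A *ᵥ b))) 0 := by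
  have hquad : (fun t : ℝ => (A *ᵥ (u - t • b)) ⬝ᵥ (A *ᵥ (u - t • b))) = fun t =>
      (A *ᵥ u) ⬝ᵥ (A *ᵥ u) - 2 * t * ((A *ᵥ u) ⬝ᵥ (A *ᵥ b)) + t ^ 2 * ((A *ᵥ b) ⬝ᵥ (A *ᵥ b)) := by
    funext t
    simp only [mulVec_sub, mulVec_smul, sub_dotProduct, dotProduct_sub, smul_dotProduct,
      dotProduct_smul, smul_eq_mul, dotProduct_comm (A *ᵥ b) (A *ᵥ u)]
    ring
  rw [hquad]
  have h := ((hasDerivAt_const (0 : ℝ) ((A *ᵥ u) ⬝ᵥ (A *ᵥ u))).sub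
    (((hasDerivAt_id (0 : ℝ)).const_mul 2).mul_const ((A *ᵥ u) ⬝ᵥ (A *ᵥ b)))).add
    ((hasDerivAt_pow 2 (0 : ℝ)).mul_const ((A *ᵥ b) ⬝ᵥ (A *ᵥ b)))
  exact h.congr_deriv (by norm_num)

end Quadratic

theorem dmat_transpose {N : ℕ} (W : Matrix (Fin N) (Fin N) ℝ) (ρ : ℝ) :
    (dmat W ρ)ᵀ = dmat W ρ :=
  diagonal_transpose _

theorem hasDerivAt_lsObj_add_smul {N p1 p2 : ℕ} (W : Matrix (Fin N) (Fin N) ℝ)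
    (X : Matrix (Fin N) (Fin p1 ⊕ Fin p2) ℝ) (Y : Fin N → ℝ) (ρ : ℝ)
    (β b : Fin p1 ⊕ Fin p2 → ℝ) :
    HasDerivAt (fun t : ℝ => lsObj W X Y ρ (β + t • b))
      (-2 * (b ⬝ᵥ (Xᵀ *ᵥ ((Smat W ρ * (dmat W ρ * dmat W ρ) * (Smat W ρ)ᵀ) *ᵥ
        (Smat W ρ *ᵥ Y - X *ᵥ β))))) 0 := by
  set A := dmat W ρ * (Smat W ρ)ᵀ
  set r := Smat W ρ *ᵥ Y - X *ᵥ β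
  have hline : (fun t : ℝ => lsObj W X Y ρ (β + t • b)) =
      fun t => (A *ᵥ (r - t • (X *ᵥ b))) ⬝ᵥ (A *ᵥ (r - t • (X *ᵥ b))) := by
    funext t
    simp only [lsObj, mulVec_add, mulVec_smul, sub_add_eq_sub_sub, A, r]
  have hAA : Aᵀ * A = Smat W ρ * (dmat W ρ * dmat W ρ) * (Smat W ρ)ᵀ := by
    simp only [A, transpose_mul, transpose_transpose, dmat_transpose, Matrix.mul_assoc]
  rw [hline, ← hAA]
  convert hasDerivAt_dotProduct_self_mulVec_sub_smul A r (X *ᵥ b) using 2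
  rw [← mulVec_mulVec, dotProduct_mulVec, vecMul_transpose, dotProduct_mulVec, vecMul_transpose,
    dotProduct_comm]

section Model

variable {N p1 p2 : ℕ}

@[simp]
theorem Xobs_apply_inl (X : Matrix (Fin N) (Fin p1 ⊕ Fin p2) ℝ) (Ex : Fin N → Fin p2 → ℝ)
    (i : Fin N) (j : Fin p1) : Xobs X Ex i (Sum.inl j) = X i (Sum.inl j) := by
  simp [Xobs]

@[simp]
theorem Xobs_apply_inr (X : Matrix (Fin N) (Fin p1 ⊕ Fin p2) ℝ) (Ex : Fin N → Fin p2 → ℝ)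
    (i : Fin N) (j : Fin p2) : Xobs X Ex i (Sum.inr j) = X i (Sum.inr j) + Ex i j :=
  rfl

theorem Xobs_mulVec (X : Matrix (Fin N) (Fin p1 ⊕ Fin p2) ℝ) (Ex : Fin N → Fin p2 → ℝ)
    (β : Fin p1 ⊕ Fin p2 → ℝ) :
    Xobs X Ex *ᵥ β = X *ᵥ β + of Ex *ᵥ (β ∘ Sum.inr) := by
  rw [Xobs, add_mulVec]
  congr 1
  ext i
  simp [mulVec, dotProduct, Fintype.sum_sum_type]

theorem Smat_mulVec_Yobs (W : Matrix (Fin N) (Fin N) ℝ) (ρ0 : ℝ)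
    (X : Matrix (Fin N) (Fin p1 ⊕ Fin p2) ℝ) (β0 : Fin p1 ⊕ Fin p2 → ℝ) (E ε : Fin N → ℝ)
    (hS : IsUnit (Smat W ρ0).det) :
    Smat W ρ0 *ᵥ Yobs W ρ0 X β0 E ε = X *ᵥ β0 + E + Smat W ρ0 *ᵥ ε := by
  rw [Yobs, mulVec_add, mulVec_mulVec, mul_nonsing_inv _ hS, one_mulVec]

theorem Smat_mulVec_Yobs_sub_Xobs_mulVec (W : Matrix (Fin N) (Fin N) ℝ) (ρ0 : ℝ)
    (X : Matrix (Fin N) (Fin p1 ⊕ Fin p2) ℝ) (β0 : Fin p1 ⊕ Fin p2 → ℝ) (E ε : Fin N → ℝ)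
    (Ex : Fin N → Fin p2 → ℝ) (hS : IsUnit (Smat W ρ0).det) :
    Smat W ρ0 *ᵥ Yobs W ρ0 X β0 E ε - Xobs X Ex *ᵥ β0 =
      E + Smat W ρ0 *ᵥ ε - of Ex *ᵥ (β0 ∘ Sum.inr) := by
  rw [Smat_mulVec_Yobs W ρ0 X β0 E ε hS, Xobs_mulVec]
  abel

def residualCoeff (S : Matrix (Fin N) (Fin N) ℝ) (β2 : Fin p2 → ℝ) (k : Fin N) :
    Fin N ⊕ Fin N ⊕ Fin N × Fin p2 → ℝ :=
  Sum.elim (Pi.single k 1) (Sum.elim (S k) fun q => if q.1 = k then -β2 q.2 else 0)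

theorem residual_apply_eq_dotProduct (S : Matrix (Fin N) (Fin N) ℝ) (β2 : Fin p2 → ℝ)
    (E ε : Fin N → ℝ) (Ex : Fin N → Fin p2 → ℝ) (k : Fin N) :
    (E + S *ᵥ ε - of Ex *ᵥ β2) k =
      residualCoeff S β2 k ⬝ᵥ Sum.elim E (Sum.elim ε fun q => Ex q.1 q.2) := by
  simp only [residualCoeff, sumElim_dotProduct_sumElim, single_dotProduct, one_mul]
  simp [dotProduct, mulVec, Fintype.sum_prod_type, mul_comm, sub_eq_add_neg, add_assoc]

end Model

section CenteredNoise

variable {Ω ι : Type*} [MeasurableSpace Ω] {μ : Measure Ω} {F : ι → Ω → ℝ}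

theorem integral_mul_eq_zero_of_iIndepFun (hindep : iIndepFun F μ)
    (hF : ∀ z, AEStronglyMeasurable (F z) μ) (hmean : ∀ z, ∫ ω, F z ω ∂μ = 0) {z w : ι}
    (hzw : z ≠ w) :
    ∫ ω, F z ω * F w ω ∂μ = 0 := by
  have h := (hindep.indepFun hzw).integral_mul_eq_mul_integral (hF z) (hF w)
  simp only [Pi.mul_apply] at h
  rw [h, hmean z, zero_mul]

variable [Fintype ι]

theorem memLp_dotProduct (hF : ∀ z, MemLp (F z) 2 μ) (b : ι → ℝ) :
    MemLp (fun ω => b ⬝ᵥ fun z => F z ω) 2 μ :=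
  memLp_finsetSum _ fun z _ => (hF z).const_mul (b z)

theorem integral_dotProduct_eq_zero (hF : ∀ z, Integrable (F z) μ)
    (hmean : ∀ z, ∫ ω, F z ω ∂μ = 0) (b : ι → ℝ) :
    ∫ ω, (b ⬝ᵥ fun z => F z ω) ∂μ = 0 := by
  simp only [dotProduct]
  rw [integral_finsetSum _ fun z _ => (hF z).const_mul (b z)]
  simp [integral_const_mul, hmean]

theorem integral_mul_dotProduct_of_iIndepFun (hindep : iIndepFun F μ)
    (hF : ∀ z, MemLp (F z) 2 μ) (hmean : ∀ z, ∫ ω, F z ω ∂μ = 0) (z : ι) (b : ι → ℝ) :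
    ∫ ω, F z ω * (b ⬝ᵥ fun w => F w ω) ∂μ = b z * ∫ ω, F z ω ^ 2 ∂μ := by
  classical
  have hterm : ∀ w, ∫ ω, b w * (F z ω * F w ω) ∂μ =
      if w = z then b z * ∫ ω, F z ω ^ 2 ∂μ else 0 := by
    intro w
    rw [integral_const_mul]
    split_ifs with hwz
    · simp [hwz, sq]
    · rw [integral_mul_eq_zero_of_iIndepFun hindep (fun z => (hF z).aestronglyMeasurable) hmean
        (Ne.symm hwz), mul_zero]
  have hexpand : ∀ ω, F z ω * (b ⬝ᵥ fun w => F w ω) = ∑ w, b w * (F z ω * F w ω) := by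
    intro ω
    simp only [dotProduct, Finset.mul_sum]
    exact Finset.sum_congr rfl fun w _ => by ring
  simp_rw [hexpand]
  rw [integral_finsetSum (f := fun w ω => b w * (F z ω * F w ω)) _
    fun w _ => ((hF z).integrable_mul (hF w)).const_mul (b w)]
  simp [hterm]

variable {n : Type*} [Fintype n] [DecidableEq n]

theorem integral_dotProduct_mulVec_eq_mul_trace (M : Matrix n n ℝ) {U V : Ω → n → ℝ}
    (hU : ∀ i, MemLp (fun ω => U ω i) 2 μ) (hV : ∀ k, MemLp (fun ω => V ω k) 2 μ) (c : ℝ)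
    (hcross : ∀ i k, ∫ ω, U ω i * V ω k ∂μ = if i = k then c else 0) :
    ∫ ω, U ω ⬝ᵥ (M *ᵥ V ω) ∂μ = c * trace M := by
  have hexpand : ∀ ω, U ω ⬝ᵥ (M *ᵥ V ω) = ∑ i, ∑ k, M i k * (U ω i * V ω k) := by
    intro ω
    simp only [dotProduct, mulVec, Finset.mul_sum]
    exact Finset.sum_congr rfl fun i _ => Finset.sum_congr rfl fun k _ => by ring
  have hint : ∀ i k, Integrable (fun ω => M i k * (U ω i * V ω k)) μ := fun i k =>
    ((hU i).integrable_mul (hV k)).const_mul (M i k)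
  simp_rw [hexpand]
  rw [integral_finsetSum _ fun i _ => integrable_finsetSum _ fun k _ => hint i k]
  simp_rw [integral_finsetSum _ fun k _ => hint _ k, integral_const_mul, hcross]
  simp [trace, Finset.mul_sum, mul_comm]

end CenteredNoise

section Moments

variable {Ω : Type*} [MeasurableSpace Ω] {μ : Measure Ω} [IsFiniteMeasure μ] {N p1 p2 : ℕ}

theorem memLp_Xobs_apply (X : Matrix (Fin N) (Fin p1 ⊕ Fin p2) ℝ) {Ex : Ω → Fin N → Fin p2 → ℝ}
    (hEx : ∀ i j, MemLp (fun ω => Ex ω i j) 2 μ) (i : Fin N) (j : Fin p1 ⊕ Fin p2) :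
    MemLp (fun ω => Xobs X (Ex ω) i j) 2 μ := by
  rcases j with j | j
  · simpa using memLp_const (X i (Sum.inl j))
  · simp only [Xobs_apply_inr]
    exact (memLp_const (X i (Sum.inr j))).add (hEx i j)

theorem integral_Xobs_mul_residual (X : Matrix (Fin N) (Fin p1 ⊕ Fin p2) ℝ)
    {E ε : Ω → Fin N → ℝ} {Ex : Ω → Fin N → Fin p2 → ℝ} {lamx2 : ℝ}
    (hindep : iIndepFun (noiseFam E ε Ex) μ) (hL2 : ∀ z, MemLp (noiseFam E ε Ex z) 2 μ)
    (hmean : ∀ z, ∫ ω, noiseFam E ε Ex z ω ∂μ = 0)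
    (hExvar : ∀ i j, ∫ ω, (Ex ω i j) ^ 2 ∂μ = lamx2)
    (S : Matrix (Fin N) (Fin N) ℝ) (β2 : Fin p2 → ℝ) (j : Fin p1 ⊕ Fin p2) (i k : Fin N) :
    ∫ ω, Xobs X (Ex ω) i j * (residualCoeff S β2 k ⬝ᵥ fun z => noiseFam E ε Ex z ω) ∂μ =
      if i = k then -lamx2 * Sum.elim (fun _ => 0) β2 j else 0 := by
  set V := fun ω => residualCoeff S β2 k ⬝ᵥ fun z => noiseFam E ε Ex z ω
  have hV : MemLp V 2 μ := memLp_dotProduct hL2 _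
  have hVmean : ∫ ω, V ω ∂μ = 0 :=
    integral_dotProduct_eq_zero (fun z => (hL2 z).integrable one_le_two) hmean _
  rcases j with j1 | j2
  · simp only [Xobs_apply_inl]
    rw [integral_const_mul, hVmean]
    simp
  · let z : Fin N ⊕ Fin N ⊕ Fin N × Fin p2 := .inr (.inr (i, j2))
    have hnoise : Integrable (fun ω => Ex ω i j2 * V ω) μ := (hL2 z).integrable_mul hV
    have hcov : ∫ ω, Ex ω i j2 * V ω ∂μ = residualCoeff S β2 k z * lamx2 := by
      rw [← hExvar i j2]
      exact integral_mul_dotProduct_of_iIndepFun hindep hL2 hmean z _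
    simp only [Xobs_apply_inr, add_mul]
    rw [integral_add ((hV.const_mul _).integrable one_le_two) hnoise, integral_const_mul, hVmean,
      hcov]
    simp only [residualCoeff, z, Sum.elim_inr]
    split_ifs <;> ring

end Moments

theorem statement_13_general
    {Ωs : Type*} [MeasurableSpace Ωs] (μ : Measure Ωs) [IsProbabilityMeasure μ]
    (N p1 p2 : ℕ)
    (W : Matrix (Fin N) (Fin N) ℝ)
    (X : Matrix (Fin N) (Fin p1 ⊕ Fin p2) ℝ)
    (ρ0 : ℝ) (β0 : Fin p1 ⊕ Fin p2 → ℝ) (lamx2 : ℝ)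
    (hS0 : 0 < (Smat W ρ0).det)
    (E ε : Ωs → Fin N → ℝ) (Ex : Ωs → Fin N → Fin p2 → ℝ)
    (hindep : iIndepFun (noiseFam E ε Ex) μ)
    (hmom : ∀ z, MemLp (noiseFam E ε Ex z) 4 μ)
    (hmean : ∀ z, ∫ ω, noiseFam E ε Ex z ω ∂μ = 0)
    (hExvar : ∀ i j, ∫ ω, (Ex ω i j) ^ 2 ∂μ = lamx2) :
    ∀ j : Fin p1 ⊕ Fin p2,
      (∫ ω, deriv (fun t : ℝ =>
          lsObj W (Xobs X (Ex ω)) (Yobs W ρ0 X β0 (E ω) (ε ω)) ρ0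
            (β0 + t • (Pi.single j 1 : (Fin p1 ⊕ Fin p2) → ℝ))) 0 ∂μ
        = Sum.elim (fun _ => (0 : ℝ))
            (fun k => 2 * lamx2 *
              Matrix.trace ((Smat W ρ0)ᵀ * Smat W ρ0 * (dmat W ρ0 * dmat W ρ0)) *
              β0 (Sum.inr k)) j) ∧
      ∫ ω, (-2 : ℝ) *
          (((Xobs X (Ex ω))ᵀ *ᵥ
            ((Smat W ρ0 * (dmat W ρ0 * dmat W ρ0) * (Smat W ρ0)ᵀ) *ᵥ
              (Smat W ρ0 *ᵥ Yobs W ρ0 X β0 (E ω) (ε ω) - Xobs X (Ex ω) *ᵥ β0))) j) ∂μ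
        = Sum.elim (fun _ => (0 : ℝ))
            (fun k => 2 * lamx2 *
              Matrix.trace ((Smat W ρ0)ᵀ * Smat W ρ0 * (dmat W ρ0 * dmat W ρ0)) *
              β0 (Sum.inr k)) j
  := by
  intro j
  set S0 := Smat W ρ0
  set M := S0 * (dmat W ρ0 * dmat W ρ0) * S0ᵀ
  have hL2 : ∀ z, MemLp (noiseFam E ε Ex z) 2 μ := fun z => (hmom z).mono_exponent (by norm_num)
  set V : Ωs → Fin N → ℝ := fun ω k => residualCoeff S0 (β0 ∘ Sum.inr) k ⬝ᵥ
    fun z => noiseFam E ε Ex z ω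
  have hresidual : ∀ ω, S0 *ᵥ Yobs W ρ0 X β0 (E ω) (ε ω) - Xobs X (Ex ω) *ᵥ β0 = V ω := by
    intro ω
    rw [Smat_mulVec_Yobs_sub_Xobs_mulVec W ρ0 X β0 _ _ _ (isUnit_iff_ne_zero.mpr hS0.ne')]
    exact funext (residual_apply_eq_dotProduct S0 _ (E ω) (ε ω) (Ex ω))
  -- `(Aᵀ *ᵥ w) j` is definitionally the dot product of the `j`-th column of `A` with `w`.
  have hexpect : ∫ ω, ((Xobs X (Ex ω))ᵀ *ᵥ (M *ᵥ V ω)) j ∂μ =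
      -lamx2 * Sum.elim (fun _ => 0) (β0 ∘ Sum.inr) j * trace M :=
    integral_dotProduct_mulVec_eq_mul_trace M
      (memLp_Xobs_apply X (fun i j => hL2 (.inr (.inr (i, j)))) · j)
      (fun k => memLp_dotProduct hL2 _) _
      (integral_Xobs_mul_residual X hindep hL2 hmean hExvar S0 _ j)
  have hgrad : ∫ ω, (-2 : ℝ) * ((Xobs X (Ex ω))ᵀ *ᵥ (M *ᵥ
      (S0 *ᵥ Yobs W ρ0 X β0 (E ω) (ε ω) - Xobs X (Ex ω) *ᵥ β0))) j ∂μ =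
      Sum.elim (fun _ => (0 : ℝ))
        (fun k => 2 * lamx2 * trace (S0ᵀ * S0 * (dmat W ρ0 * dmat W ρ0)) * β0 (Sum.inr k)) j := by
    simp_rw [hresidual, integral_const_mul, hexpect, M, trace_mul_cycle S0 _ S0ᵀ]
    rcases j with j1 | j2 <;> simp only [Sum.elim_inl, Sum.elim_inr, Function.comp_apply] <;> ring
  refine ⟨?_, hgrad⟩
  rw [← hgrad]
  refine integral_congr_ae (Filter.Eventually.of_forall fun ω => ?_)
  dsimp only
  rw [(hasDerivAt_lsObj_add_smul W _ _ ρ0 β0 _).deriv, single_dotProduct, one_mul]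

theorem statement_13
    {Ωs : Type*} [MeasurableSpace Ωs] (μ : Measure Ωs) [IsProbabilityMeasure μ]
    (N p1 p2 : ℕ) (hN : 0 < N) (hp1 : 0 < p1) (hp2 : 0 < p2)
    (W : Matrix (Fin N) (Fin N) ℝ) (hW : ∀ i, W i i = 0)
    (X : Matrix (Fin N) (Fin p1 ⊕ Fin p2) ℝ)
    (ρ0 : ℝ) (β0 : Fin p1 ⊕ Fin p2 → ℝ) (σ02 lam2 lamx2 : ℝ)
    (hσ : 0 < σ02) (hlam : 0 < lam2) (hlamx : 0 < lamx2)
    (hS0 : 0 < (Smat W ρ0).det)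
    (E ε : Ωs → Fin N → ℝ) (Ex : Ωs → Fin N → Fin p2 → ℝ)
    (hindep : iIndepFun (noiseFam E ε Ex) μ)
    (hmom : ∀ z, MemLp (noiseFam E ε Ex z) 4 μ)
    (hmean : ∀ z, ∫ ω, noiseFam E ε Ex z ω ∂μ = 0)
    (hEvar : ∀ i, ∫ ω, (E ω i) ^ 2 ∂μ = σ02)
    (hepsvar : ∀ i, ∫ ω, (ε ω i) ^ 2 ∂μ = lam2)
    (hExvar : ∀ i j, ∫ ω, (Ex ω i j) ^ 2 ∂μ = lamx2) :
    ∀ j : Fin p1 ⊕ Fin p2,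
      (∫ ω, deriv (fun t : ℝ =>
          lsObj W (Xobs X (Ex ω)) (Yobs W ρ0 X β0 (E ω) (ε ω)) ρ0
            (β0 + t • (Pi.single j 1 : (Fin p1 ⊕ Fin p2) → ℝ))) 0 ∂μ
        = Sum.elim (fun _ => (0 : ℝ))
            (fun k => 2 * lamx2 *
              Matrix.trace ((Smat W ρ0)ᵀ * Smat W ρ0 * (dmat W ρ0 * dmat W ρ0)) *
              β0 (Sum.inr k)) j) ∧
      ∫ ω, (-2 : ℝ) *
          (((Xobs X (Ex ω))ᵀ *ᵥ
            ((Smat W ρ0 * (dmat W ρ0 * dmat W ρ0) * (Smat W ρ0)ᵀ) *ᵥ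
              (Smat W ρ0 *ᵥ Yobs W ρ0 X β0 (E ω) (ε ω) - Xobs X (Ex ω) *ᵥ β0))) j) ∂μ
        = Sum.elim (fun _ => (0 : ℝ))
            (fun k => 2 * lamx2 *
              Matrix.trace ((Smat W ρ0)ᵀ * Smat W ρ0 * (dmat W ρ0 * dmat W ρ0)) *
              β0 (Sum.inr k)) j :=
  statement_13_general μ N p1 p2 W X ρ0 β0 lamx2 hS0 E ε Ex hindep hmom hmean hExvar

end PSAR
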